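/- arXiv:1912.06792 — 2 statements merged into one kernel-verified Lean document; each statement's English description precedes it below -/
import Mathlib

section
/- For every finite family (ξ_j)_{j∈J} of complex numbers, every real δ with 0 < δ < π/2, and every N ∈ ℕ, there exists an integer n ≥ N such that for every j ∈ J one has Re(ξ_j^n) ≥ cos(δ)·|ξ_j|^n. -/
/-!
The arguments `(arg ξ_j)_j` form one point `θ` of the compact group `(ℝ/2πℤ)^J`. By compactness
the multiples `n • θ` come back within `δ` of `0` for arbitrarily large `n`, and for such `n`
`Re (ξ_j ^ n) = |ξ_j| ^ n cos (n arg ξ_j) ≥ cos δ |ξ_j| ^ n`, since `cos` decreases on `[0, π]`.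
-/

open Filter

/-- A cluster point `a` of the multiples `n • x` is approached at two times `m < n` far apart,
and then `(n - m) • x` lies within `ε` of `0`. -/
theorem frequently_norm_nsmul_lt {G : Type*} [SeminormedAddCommGroup G] [CompactSpace G]
    (x : G) {ε : ℝ} (hε : 0 < ε) : ∃ᶠ n : ℕ in atTop, ‖n • x‖ < ε := by
  obtain ⟨a, ha⟩ := exists_clusterPt_of_compactSpace (map (· • x) (atTop : Filter ℕ))
  have hnear : ∃ᶠ n : ℕ in atTop, n • x ∈ Metric.ball a (ε / 2) :=
    mapClusterPt_iff_frequently.mp ha _ (Metric.ball_mem_nhds a (half_pos hε))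
  rw [frequently_atTop] at hnear ⊢
  intro N
  obtain ⟨m, -, hm⟩ := hnear 0
  obtain ⟨n, hmn, hn⟩ := hnear (m + N)
  refine ⟨n - m, by omega, ?_⟩
  calc ‖(n - m) • x‖ = dist (n • x) (m • x) := by
        rw [dist_eq_norm, sub_nsmul _ (by omega : m ≤ n), sub_eq_add_neg]
    _ ≤ dist (n • x) a + dist (m • x) a := dist_triangle_right _ _ _
    _ < ε / 2 + ε / 2 := add_lt_add hn hm
    _ = ε := add_halves ε

namespace Real.Angle

instance : CompactSpace Angle :=
  haveI : Fact (0 < 2 * π) := ⟨two_pi_pos⟩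
  inferInstanceAs (CompactSpace (AddCircle (2 * π)))

theorem norm_eq_abs_toReal (θ : Angle) : ‖θ‖ = |θ.toReal| := by
  conv_lhs => rw [← coe_toReal θ]
  refine (AddCircle.norm_coe_eq_abs_iff (p := 2 * π) two_pi_pos.ne').mpr ?_
  rw [abs_of_pos two_pi_pos, mul_div_cancel_left₀ π two_ne_zero]
  exact abs_toReal_le_pi θ

theorem cos_le_cos_of_norm_le {θ : Angle} {δ : ℝ} (h : ‖θ‖ ≤ δ) (hδ : δ ≤ π) :
    Real.cos δ ≤ cos θ := by
  rw [← cos_toReal, ← Real.cos_abs θ.toReal]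
  rw [norm_eq_abs_toReal] at h
  exact Real.cos_le_cos_of_nonneg_of_le_pi (abs_nonneg _) hδ h

end Real.Angle

theorem Complex.re_pow_eq_norm_pow_mul_cos (z : ℂ) (n : ℕ) :
    (z ^ n).re = ‖z‖ ^ n * Real.Angle.cos (n • (z.arg : Real.Angle)) := by
  rw [← arg_pow_coe_angle, Real.Angle.cos_coe, ← norm_pow, norm_mul_cos_arg]

/-- Simultaneous argument recurrence: for a finite family of complex numbers `ξ j`,
`0 < δ < π/2` and `N`, there is `n ≥ N` with `Re (ξ j ^ n) ≥ cos δ * |ξ j| ^ n` for all `j`. -/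
theorem simultaneous_argument_recurrence {J : Type*} [Fintype J] (ξ : J → ℂ)
    (δ : ℝ) (hδ0 : 0 < δ) (hδ : δ < Real.pi / 2) (N : ℕ) :
    ∃ n : ℕ, N ≤ n ∧ ∀ j : J, Real.cos δ * ‖ξ j‖ ^ n ≤ ((ξ j) ^ n).re := by
  let θ : J → Real.Angle := fun j => ((ξ j).arg : Real.Angle)
  obtain ⟨n, hNn, hθn⟩ := frequently_atTop.mp (frequently_norm_nsmul_lt θ hδ0) N
  refine ⟨n, hNn, fun j => ?_⟩
  have hcos : Real.cos δ ≤ Real.Angle.cos (n • θ j) :=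
    Real.Angle.cos_le_cos_of_norm_le ((norm_le_pi_norm (n • θ) j).trans hθn.le)
      (by linarith [Real.pi_pos])
  rw [Complex.re_pow_eq_norm_pow_mul_cos, mul_comm]
  exact mul_le_mul_of_nonneg_left hcos (by positivity)
end

section
/- Let X be a connected, noncompact Hausdorff topological space, f : X → X a homeomorphism, and μ a Borel measure on X such that μ(U) > 0 for every nonempty open set U and μ(f⁻¹(A)) = μ(A) for every Borel set A. If K ⊆ X is a compact set with μ(K) < ∞ and f⁻¹(K) contained in the interior of K, then K is empty. -/
open MeasureTheory

/-- If a homeomorphism of a connected noncompact Hausdorff space preserves a Borel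
measure positive on nonempty open sets, then a compact set of finite measure whose
preimage is contained in its interior must be empty. -/
theorem compact_attractor_empty {X : Type*} [TopologicalSpace X] [T2Space X]
    [ConnectedSpace X] [MeasurableSpace X] [BorelSpace X]
    (hnc : ¬ CompactSpace X) (f : X ≃ₜ X) (μ : Measure X)
    (hpos : ∀ U : Set X, IsOpen U → U.Nonempty → 0 < μ U)
    (hinv : ∀ A : Set X, MeasurableSet A → μ (f ⁻¹' A) = μ A)
    (K : Set X) (hK : IsCompact K) (hμK : μ K < ⊤)
    (hsub : f ⁻¹' K ⊆ interior K) : K = ∅ := by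
  -- f⁻¹(K) is compact, hence closed
  have hKclosed : IsClosed K := hK.isClosed
  have hpre : IsCompact (f ⁻¹' K) := by
    rw [← f.image_symm]
    exact hK.image f.symm.continuous
  have hpreClosed : IsClosed (f ⁻¹' K) := hpre.isClosed
  have hpreMeas : MeasurableSet (f ⁻¹' K) := hpreClosed.measurableSet
  -- measure equalities
  have h1 : μ (f ⁻¹' K) = μ K := hinv K hKclosed.measurableSet
  have h2 : μ (interior K) ≤ μ K := measure_mono interior_subset
  have h3 : μ (f ⁻¹' K) ≤ μ (interior K) := measure_mono hsub
  have heq : μ (f ⁻¹' K) = μ (interior K) := le_antisymm h3 (by rw [h1]; exact h2)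
  have hfin : μ (f ⁻¹' K) ≠ ⊤ := by rw [h1]; exact hμK.ne
  have hdiff : μ (interior K \ f ⁻¹' K) = 0 := by
    rw [measure_diff hsub hpreMeas.nullMeasurableSet hfin, heq, tsub_self]
  -- the open set interior K \ f⁻¹K must be empty
  have hopen : IsOpen (interior K \ f ⁻¹' K) := isOpen_interior.sdiff hpreClosed
  have hempty : interior K \ f ⁻¹' K = ∅ := by
    by_contra h
    have := hpos _ hopen (Set.nonempty_iff_ne_empty.mpr h)
    rw [hdiff] at this; exact lt_irrefl 0 this
  have hsupeq : f ⁻¹' K = interior K :=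
    le_antisymm hsub (by rwa [Set.diff_eq_empty] at hempty)
  -- interior K is clopen
  have hclopen : IsClopen (interior K) := ⟨hsupeq ▸ hpreClosed, isOpen_interior⟩
  rcases isClopen_iff.mp hclopen with h0 | huniv
  · -- interior K = ∅, so f⁻¹K = ∅, so K = ∅
    have : f ⁻¹' K = ∅ := by rw [hsupeq, h0]
    have := congrArg (Set.image f) this
    rwa [Set.image_preimage_eq _ f.surjective, Set.image_empty] at this
  · have hKuniv : K = Set.univ :=
      Set.eq_univ_of_univ_subset (huniv ▸ interior_subset)
    exact absurd (isCompact_univ_iff.mp (hKuniv ▸ hK)) hnc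
end
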